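/- arXiv:2305.05666 — 6 statements merged into one kernel-verified Lean document; each statement's English description precedes it below -/
import Mathlib

section
/- Let M and M̄ be finite MDPs and h = (f, g_s) an MDP homomorphism from M to M̄ (f: S → S̄ and g_s: A → Ā surjective, with reward invariance R(s,a) = R̄(f(s), g_s(a)) and transition equivariance τ̄_{g_s(a)}(f(s') | f(s)) = Σ_{s'' ∈ [s']} τ_a(s'' | s)). Then for every state-action pair (s,a), the optimal action-value functions satisfy Q*(s,a) = Q̄*(f(s), g_s(a)). -/
/-!
The pullback `(s, a) ↦ Q̄*(f s, g_s a)` of the optimal action values of `M̄` is again a fixed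
point of the Bellman optimality operator of `M`: reward invariance matches the rewards,
surjectivity of `g_s` matches the maxima over actions, and transition equivariance turns the
expectation over `S̄` into one over `S`, fibre by fibre. The operator is a `γ`-contraction for the
sup distance, so its fixed point is unique and the pullback is `Q*`.
-/

open Finset

lemma Finset.sup'_univ_comp_of_surjective {A B α : Type*} [Fintype A] [Fintype B] [Nonempty A]
    [Nonempty B] [ConditionallyCompleteLinearOrder α] {g : A → B} (hg : g.Surjective)
    (h : B → α) : univ.sup' univ_nonempty (h ∘ g) = univ.sup' univ_nonempty h := by
  rw [sup'_univ_eq_ciSup, sup'_univ_eq_ciSup]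
  exact hg.iSup_comp h

lemma Finset.abs_sup'_univ_sub_sup'_univ_le_dist {A : Type*} [Fintype A] [Nonempty A]
    (F G : A → ℝ) : |univ.sup' univ_nonempty F - univ.sup' univ_nonempty G| ≤ dist F G := by
  have hFG a : |F a - G a| ≤ dist F G := by
    rw [← Real.dist_eq]
    exact dist_le_pi_dist F G a
  rw [abs_sub_le_iff, sub_le_iff_le_add, sub_le_iff_le_add]
  constructor <;> refine sup'_le _ _ fun a _ => ?_
  · linarith [(abs_le.mp (hFG a)).2, le_sup' G (mem_univ a)]
  · linarith [(abs_le.mp (hFG a)).1, le_sup' F (mem_univ a)]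

lemma Finset.sum_mul_eq_sum_mul_comp_of_fiberwise {S T : Type*} [Fintype S] [Fintype T]
    [DecidableEq T] {f : S → T} (hf : f.Surjective) {p : S → ℝ} {q : T → ℝ}
    (hpq : ∀ s, q (f s) = ∑ s' ∈ univ.filter (fun s' => f s' = f s), p s') (V : T → ℝ) :
    ∑ t, q t * V t = ∑ s, p s * V (f s) := by
  rw [← sum_fiberwise univ f]
  refine sum_congr rfl fun t _ => ?_
  obtain ⟨s, rfl⟩ := hf t
  rw [hpq s, sum_mul]
  refine sum_congr rfl fun s' hs' => ?_
  rw [(mem_filter.mp hs').2]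

section BellmanOptimality

variable {S A : Type*} [Fintype S] [Fintype A] [Nonempty A]

noncomputable def bellmanOpt (τ : A → S → S → ℝ) (R : S → A → ℝ) (γ : ℝ) (Q : S → A → ℝ) :
    S → A → ℝ :=
  fun s a => R s a + γ * ∑ s', τ a s s' * univ.sup' univ_nonempty (Q s')

lemma dist_bellmanOpt_le {τ : A → S → S → ℝ} (R : S → A → ℝ) {γ : ℝ} (hγ : 0 ≤ γ)
    (hτpos : ∀ a s s', 0 ≤ τ a s s') (hτsum : ∀ a s, ∑ s', τ a s s' = 1) (Q Q' : S → A → ℝ) :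
    dist (bellmanOpt τ R γ Q) (bellmanOpt τ R γ Q') ≤ γ * dist Q Q' := by
  have hD : 0 ≤ γ * dist Q Q' := mul_nonneg hγ dist_nonneg
  refine (dist_pi_le_iff hD).mpr fun s => (dist_pi_le_iff hD).mpr fun a => ?_
  set V := fun s' => univ.sup' univ_nonempty (Q s')
  set V' := fun s' => univ.sup' univ_nonempty (Q' s')
  have hdiff : bellmanOpt τ R γ Q s a - bellmanOpt τ R γ Q' s a
      = γ * ∑ s', τ a s s' * (V s' - V' s') := by
    simp only [bellmanOpt, mul_sub, sum_sub_distrib, V, V']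
    ring
  have hexp : |∑ s', τ a s s' * (V s' - V' s')| ≤ dist Q Q' :=
    calc |∑ s', τ a s s' * (V s' - V' s')|
        ≤ ∑ s', τ a s s' * |V s' - V' s'| := by
          refine (abs_sum_le_sum_abs _ _).trans (le_of_eq (sum_congr rfl fun s' _ => ?_))
          rw [abs_mul, abs_of_nonneg (hτpos a s s')]
      _ ≤ ∑ s', τ a s s' * dist Q Q' := by
          refine sum_le_sum fun s' _ => mul_le_mul_of_nonneg_left ?_ (hτpos a s s')
          exact (abs_sup'_univ_sub_sup'_univ_le_dist _ _).trans (dist_le_pi_dist Q Q' s')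
      _ = dist Q Q' := by rw [← sum_mul, hτsum, one_mul]
  rw [Real.dist_eq, hdiff, abs_mul, abs_of_nonneg hγ]
  exact mul_le_mul_of_nonneg_left hexp hγ

lemma contractingWith_bellmanOpt {τ : A → S → S → ℝ} (R : S → A → ℝ) {γ : ℝ} (hγ0 : 0 ≤ γ)
    (hγ1 : γ < 1) (hτpos : ∀ a s s', 0 ≤ τ a s s') (hτsum : ∀ a s, ∑ s', τ a s s' = 1) :
    ContractingWith ⟨γ, hγ0⟩ (bellmanOpt τ R γ) :=
  ⟨hγ1, LipschitzWith.of_dist_le_mul (dist_bellmanOpt_le R hγ0 hτpos hτsum)⟩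

lemma bellmanOpt_pullback {Sb Ab : Type*} [Fintype Sb] [Fintype Ab] [DecidableEq Sb] [Nonempty Ab]
    {τ : A → S → S → ℝ} {R : S → A → ℝ} {τb : Ab → Sb → Sb → ℝ} {Rb : Sb → Ab → ℝ} (γ : ℝ)
    {f : S → Sb} {g : S → A → Ab} (hf : f.Surjective) (hg : ∀ s, (g s).Surjective)
    (hR : ∀ s a, R s a = Rb (f s) (g s a))
    (hτeq : ∀ s a s', τb (g s a) (f s) (f s')
        = ∑ s'' ∈ univ.filter (fun s'' => f s'' = f s'), τ a s s'')
    (Qb : Sb → Ab → ℝ) :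
    bellmanOpt τ R γ (fun s a => Qb (f s) (g s a))
      = fun s a => bellmanOpt τb Rb γ Qb (f s) (g s a) := by
  funext s a
  have hsup s' : univ.sup' univ_nonempty (fun a' => Qb (f s') (g s' a'))
      = univ.sup' univ_nonempty (Qb (f s')) :=
    sup'_univ_comp_of_surjective (hg s') (Qb (f s'))
  simp only [bellmanOpt, hsup, hR]
  rw [sum_mul_eq_sum_mul_comp_of_fiberwise hf (hτeq s a)]

end BellmanOptimality

theorem stmt_0_general
    {S A Sb Ab : Type*} [Fintype S] [Fintype A] [Fintype Sb] [Fintype Ab] [DecidableEq Sb]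
    [Nonempty A] [Nonempty Ab]
    (τ : A → S → S → ℝ) (R : S → A → ℝ) (γ : ℝ) (hγ0 : 0 < γ) (hγ1 : γ < 1)
    (hτpos : ∀ a s s', 0 ≤ τ a s s') (hτsum : ∀ a s, ∑ s', τ a s s' = 1)
    (τb : Ab → Sb → Sb → ℝ) (Rb : Sb → Ab → ℝ)
    (f : S → Sb) (g : S → A → Ab)
    (hf : Function.Surjective f) (hg : ∀ s, Function.Surjective (g s))
    -- reward invariance
    (hR : ∀ s a, R s a = Rb (f s) (g s a))
    -- transition equivariance
    (hτeq : ∀ s a s', τb (g s a) (f s) (f s')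
        = ∑ s'' ∈ univ.filter (fun s'' => f s'' = f s'), τ a s s'')
    -- Q* is the (unique) fixed point of the Bellman optimality operator on M
    (Q : S → A → ℝ)
    (hQ : ∀ s a, Q s a
        = R s a + γ * ∑ s', τ a s s' * univ.sup' univ_nonempty (fun a' => Q s' a'))
    -- Q̄* is the (unique) fixed point of the Bellman optimality operator on M̄
    (Qb : Sb → Ab → ℝ)
    (hQb : ∀ sb ab, Qb sb ab
        = Rb sb ab + γ * ∑ sb', τb ab sb sb' * univ.sup' univ_nonempty (fun ab' => Qb sb' ab')) :
    ∀ s a, Q s a = Qb (f s) (g s a) := by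
  have hQ_fixed : Function.IsFixedPt (bellmanOpt τ R γ) Q := funext₂ fun s a => (hQ s a).symm
  have hQb_fixed : Function.IsFixedPt (bellmanOpt τb Rb γ) Qb :=
    funext₂ fun sb ab => (hQb sb ab).symm
  have hpullback_fixed :
      Function.IsFixedPt (bellmanOpt τ R γ) (fun s a => Qb (f s) (g s a)) := by
    rw [Function.IsFixedPt, bellmanOpt_pullback γ hf hg hR hτeq, hQb_fixed.eq]
  have hunique := (contractingWith_bellmanOpt R hγ0.le hγ1 hτpos hτsum).fixedPoint_unique'
    hQ_fixed hpullback_fixed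
  exact fun s a => congrFun₂ hunique s a

/-- Optimal value equivalence for finite MDP homomorphisms:
`Q*(s,a) = Q̄*(f(s), g_s(a))`. -/
theorem stmt_0
    {S A Sb Ab : Type*} [Fintype S] [Fintype A] [Fintype Sb] [Fintype Ab] [DecidableEq Sb]
    [Nonempty A] [Nonempty Ab]
    (τ : A → S → S → ℝ) (R : S → A → ℝ) (γ : ℝ) (hγ0 : 0 < γ) (hγ1 : γ < 1)
    (hτpos : ∀ a s s', 0 ≤ τ a s s') (hτsum : ∀ a s, ∑ s', τ a s s' = 1)
    (τb : Ab → Sb → Sb → ℝ) (Rb : Sb → Ab → ℝ)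
    (hτbpos : ∀ ab sb sb', 0 ≤ τb ab sb sb') (hτbsum : ∀ ab sb, ∑ sb', τb ab sb sb' = 1)
    (f : S → Sb) (g : S → A → Ab)
    (hf : Function.Surjective f) (hg : ∀ s, Function.Surjective (g s))
    -- reward invariance
    (hR : ∀ s a, R s a = Rb (f s) (g s a))
    -- transition equivariance
    (hτeq : ∀ s a s', τb (g s a) (f s) (f s')
        = ∑ s'' ∈ univ.filter (fun s'' => f s'' = f s'), τ a s s'')
    -- Q* is the (unique) fixed point of the Bellman optimality operator on M
    (Q : S → A → ℝ)
    (hQ : ∀ s a, Q s a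
        = R s a + γ * ∑ s', τ a s s' * univ.sup' univ_nonempty (fun a' => Q s' a'))
    -- Q̄* is the (unique) fixed point of the Bellman optimality operator on M̄
    (Qb : Sb → Ab → ℝ)
    (hQb : ∀ sb ab, Qb sb ab
        = Rb sb ab + γ * ∑ sb', τb ab sb sb' * univ.sup' univ_nonempty (fun ab' => Qb sb' ab')) :
    ∀ s a, Q s a = Qb (f s) (g s a) :=
  stmt_0_general τ R γ hγ0 hγ1 hτpos hτsum τb Rb f g hf hg hR hτeq Q hQ Qb hQb
end

section
/- Let h = (f, g_s) be a finite MDP homomorphism from M to M̄, π̄ a policy on M̄, and π↑ any lifted policy satisfying Σ_{a' ∈ g_s^{-1}({g_s(a)})} π↑(a'|s) = π̄(g_s(a)|f(s)) for all s, a. Then for all (s,a): Q^{π↑}(s,a) = Q̄^{π̄}(f(s), g_s(a)). -/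
/-!
Composing the abstract value `Q̄^{π̄}` with `(f, g_s)` gives a fixed point of the Bellman
equation of `π↑` on `M`: summing over the fibres of `g_s` turns the average under `π↑` into the
average under `π̄` (this is the lifting condition), and summing over the fibres of `f` turns the
transition kernel `τ_a` into `τ̄_{g_s(a)}` (this is transition equivariance). For `|γ| < 1` the
Bellman equation has at most one solution, since the difference of two solutions is multiplied by
`γ` under a Markov averaging operator, which does not increase the sup norm.
-/

open Finset

lemma abs_sum_mul_le_of_forall_abs_le {ι : Type*} [Fintype ι] {w x : ι → ℝ} {c : ℝ}
    (hw0 : ∀ i, 0 ≤ w i) (hw1 : ∑ i, w i = 1) (hx : ∀ i, |x i| ≤ c) :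
    |∑ i, w i * x i| ≤ c :=
  calc |∑ i, w i * x i| ≤ ∑ i, |w i * x i| := abs_sum_le_sum_abs _ _
    _ ≤ ∑ i, w i * c := sum_le_sum fun i _ => by
        rw [abs_mul, abs_of_nonneg (hw0 i)]
        exact mul_le_mul_of_nonneg_left (hx i) (hw0 i)
    _ = c := by rw [← sum_mul, hw1, one_mul]

lemma sum_mul_comp_eq_sum_pushforward {ι κ : Type*} [Fintype ι] [Fintype κ] [DecidableEq κ]
    {p : ι → κ} (hp : Function.Surjective p) {w : ι → ℝ} {wb : κ → ℝ}
    (hw : ∀ i, ∑ j ∈ univ.filter (fun j => p j = p i), w j = wb (p i)) (V : κ → ℝ) :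
    ∑ i, w i * V (p i) = ∑ k, wb k * V k := by
  rw [← sum_fiberwise univ p (fun i => w i * V (p i))]
  refine sum_congr rfl fun k _ => ?_
  obtain ⟨i, rfl⟩ := hp k
  rw [← hw i, sum_mul]
  refine sum_congr rfl fun j hj => ?_
  rw [(mem_filter.mp hj).2]

section Bellman

variable {S A : Type*} [Fintype S] [Fintype A]

def expectedNextQ (τ : A → S → S → ℝ) (π : S → A → ℝ) (Q : S → A → ℝ) : S → A → ℝ :=
  fun s a => ∑ s', τ a s s' * ∑ a', π s' a' * Q s' a'

def IsBellmanFixedPoint (τ : A → S → S → ℝ) (R : S → A → ℝ) (γ : ℝ) (π : S → A → ℝ)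
    (Q : S → A → ℝ) : Prop :=
  ∀ s a, Q s a = R s a + γ * expectedNextQ τ π Q s a

lemma expectedNextQ_sub (τ : A → S → S → ℝ) (π : S → A → ℝ) (Q₁ Q₂ : S → A → ℝ) (s : S)
    (a : A) : expectedNextQ τ π (Q₁ - Q₂) s a
      = expectedNextQ τ π Q₁ s a - expectedNextQ τ π Q₂ s a := by
  simp only [expectedNextQ, Pi.sub_apply, mul_sub, sum_sub_distrib]

lemma norm_expectedNextQ_le {τ : A → S → S → ℝ} {π : S → A → ℝ}
    (hτ0 : ∀ a s s', 0 ≤ τ a s s') (hτ1 : ∀ a s, ∑ s', τ a s s' = 1)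
    (hπ0 : ∀ s a, 0 ≤ π s a) (hπ1 : ∀ s, ∑ a, π s a = 1) (Q : S → A → ℝ) :
    ‖expectedNextQ τ π Q‖ ≤ ‖Q‖ := by
  have hQ : ∀ s a, |Q s a| ≤ ‖Q‖ := fun s a =>
    (norm_le_pi_norm (Q s) a).trans (norm_le_pi_norm Q s)
  refine (pi_norm_le_iff_of_nonneg (norm_nonneg Q)).mpr fun s => ?_
  refine (pi_norm_le_iff_of_nonneg (norm_nonneg Q)).mpr fun a => ?_
  rw [Real.norm_eq_abs]
  exact abs_sum_mul_le_of_forall_abs_le (hτ0 a s) (hτ1 a s) fun s' =>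
    abs_sum_mul_le_of_forall_abs_le (hπ0 s') (hπ1 s') (hQ s')

lemma IsBellmanFixedPoint.unique {τ : A → S → S → ℝ} {R : S → A → ℝ} {γ : ℝ}
    {π : S → A → ℝ} {Q₁ Q₂ : S → A → ℝ} (hγ : |γ| < 1)
    (hτ0 : ∀ a s s', 0 ≤ τ a s s') (hτ1 : ∀ a s, ∑ s', τ a s s' = 1)
    (hπ0 : ∀ s a, 0 ≤ π s a) (hπ1 : ∀ s, ∑ a, π s a = 1)
    (h₁ : IsBellmanFixedPoint τ R γ π Q₁) (h₂ : IsBellmanFixedPoint τ R γ π Q₂) :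
    Q₁ = Q₂ := by
  have hdiff : Q₁ - Q₂ = γ • expectedNextQ τ π (Q₁ - Q₂) := by
    funext s a
    rw [Pi.sub_apply, Pi.sub_apply, h₁ s a, h₂ s a, Pi.smul_apply, Pi.smul_apply,
      expectedNextQ_sub, smul_eq_mul]
    ring
  have hcontract : ‖Q₁ - Q₂‖ ≤ |γ| * ‖Q₁ - Q₂‖ :=
    calc ‖Q₁ - Q₂‖ = |γ| * ‖expectedNextQ τ π (Q₁ - Q₂)‖ := by
          rw [← Real.norm_eq_abs, ← norm_smul, ← hdiff]
      _ ≤ |γ| * ‖Q₁ - Q₂‖ :=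
          mul_le_mul_of_nonneg_left (norm_expectedNextQ_le hτ0 hτ1 hπ0 hπ1 _) (abs_nonneg γ)
  have hzero : ‖Q₁ - Q₂‖ = 0 := by nlinarith [norm_nonneg (Q₁ - Q₂)]
  exact sub_eq_zero.mp (norm_eq_zero.mp hzero)

variable {Sb Ab : Type*} [Fintype Sb] [Fintype Ab] [DecidableEq Sb] [DecidableEq Ab]

lemma IsBellmanFixedPoint.comp_homomorphism {τ : A → S → S → ℝ} {R : S → A → ℝ} {γ : ℝ}
    {τb : Ab → Sb → Sb → ℝ} {Rb : Sb → Ab → ℝ} {f : S → Sb} {g : S → A → Ab}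
    (hf : Function.Surjective f) (hg : ∀ s, Function.Surjective (g s))
    (hR : ∀ s a, R s a = Rb (f s) (g s a))
    (hτeq : ∀ s a s', τb (g s a) (f s) (f s')
        = ∑ s'' ∈ univ.filter (fun s'' => f s'' = f s'), τ a s s'')
    {πb : Sb → Ab → ℝ} {πlift : S → A → ℝ}
    (hlift : ∀ s a, ∑ a' ∈ univ.filter (fun a' => g s a' = g s a), πlift s a'
        = πb (f s) (g s a))
    {Qb : Sb → Ab → ℝ} (hQb : IsBellmanFixedPoint τb Rb γ πb Qb) :
    IsBellmanFixedPoint τ R γ πlift (fun s a => Qb (f s) (g s a)) := by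
  intro s a
  dsimp only
  rw [hQb, hR]
  congr 2
  have hpolicy : ∀ s', ∑ a', πlift s' a' * Qb (f s') (g s' a')
      = ∑ ab', πb (f s') ab' * Qb (f s') ab' := fun s' =>
    sum_mul_comp_eq_sum_pushforward (hg s') (hlift s') (Qb (f s'))
  simp only [expectedNextQ, hpolicy]
  exact (sum_mul_comp_eq_sum_pushforward hf (fun s' => (hτeq s a s').symm)
    (fun sb' => ∑ ab', πb sb' ab' * Qb sb' ab')).symm

end Bellman

theorem stmt_2_general
    {S A Sb Ab : Type*} [Fintype S] [Fintype A] [Fintype Sb] [Fintype Ab]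
    [DecidableEq Sb] [DecidableEq Ab]
    (τ : A → S → S → ℝ) (R : S → A → ℝ) (γ : ℝ) (hγ0 : 0 < γ) (hγ1 : γ < 1)
    (hτpos : ∀ a s s', 0 ≤ τ a s s') (hτsum : ∀ a s, ∑ s', τ a s s' = 1)
    (τb : Ab → Sb → Sb → ℝ) (Rb : Sb → Ab → ℝ)
    (f : S → Sb) (g : S → A → Ab)
    (hf : Function.Surjective f) (hg : ∀ s, Function.Surjective (g s))
    -- reward invariance
    (hR : ∀ s a, R s a = Rb (f s) (g s a))
    -- transition equivariance
    (hτeq : ∀ s a s', τb (g s a) (f s) (f s')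
        = ∑ s'' ∈ univ.filter (fun s'' => f s'' = f s'), τ a s s'')
    -- π̄ is a policy on M̄ and π↑ a policy on M
    (πb : Sb → Ab → ℝ)
    (πlift : S → A → ℝ)
    (hπpos : ∀ s a, 0 ≤ πlift s a) (hπsum : ∀ s, ∑ a, πlift s a = 1)
    -- π↑ is a lifted policy of π̄
    (hlift : ∀ s a, ∑ a' ∈ univ.filter (fun a' => g s a' = g s a), πlift s a'
        = πb (f s) (g s a))
    -- Q^{π↑} is the (unique) fixed point of the Bellman operator for π↑ on M
    (Q : S → A → ℝ)
    (hQ : ∀ s a, Q s a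
        = R s a + γ * ∑ s', τ a s s' * ∑ a', πlift s' a' * Q s' a')
    -- Q̄^{π̄} is the (unique) fixed point of the Bellman operator for π̄ on M̄
    (Qb : Sb → Ab → ℝ)
    (hQb : ∀ sb ab, Qb sb ab
        = Rb sb ab + γ * ∑ sb', τb ab sb sb' * ∑ ab', πb sb' ab' * Qb sb' ab') :
    ∀ s a, Q s a = Qb (f s) (g s a) := by
  have hγ : |γ| < 1 := abs_lt.mpr ⟨by linarith, hγ1⟩
  have hpullback : IsBellmanFixedPoint τ R γ πlift (fun s a => Qb (f s) (g s a)) :=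
    IsBellmanFixedPoint.comp_homomorphism hf hg hR hτeq hlift hQb
  intro s a
  exact congrFun₂ (IsBellmanFixedPoint.unique hγ hτpos hτsum hπpos hπsum hQ hpullback) s a

/-- Value equivalence for finite MDP homomorphisms: for any abstract policy `π̄` and any
lifted policy `π↑` (one whose fiber sums match `π̄`), `Q^{π↑}(s,a) = Q̄^{π̄}(f(s), g_s(a))`. -/
theorem stmt_2
    {S A Sb Ab : Type*} [Fintype S] [Fintype A] [Fintype Sb] [Fintype Ab]
    [DecidableEq Sb] [DecidableEq Ab]
    (τ : A → S → S → ℝ) (R : S → A → ℝ) (γ : ℝ) (hγ0 : 0 < γ) (hγ1 : γ < 1)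
    (hτpos : ∀ a s s', 0 ≤ τ a s s') (hτsum : ∀ a s, ∑ s', τ a s s' = 1)
    (τb : Ab → Sb → Sb → ℝ) (Rb : Sb → Ab → ℝ)
    (hτbpos : ∀ ab sb sb', 0 ≤ τb ab sb sb') (hτbsum : ∀ ab sb, ∑ sb', τb ab sb sb' = 1)
    (f : S → Sb) (g : S → A → Ab)
    (hf : Function.Surjective f) (hg : ∀ s, Function.Surjective (g s))
    -- reward invariance
    (hR : ∀ s a, R s a = Rb (f s) (g s a))
    -- transition equivariance
    (hτeq : ∀ s a s', τb (g s a) (f s) (f s')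
        = ∑ s'' ∈ univ.filter (fun s'' => f s'' = f s'), τ a s s'')
    -- π̄ is a policy on M̄ and π↑ a policy on M
    (πb : Sb → Ab → ℝ)
    (hπbpos : ∀ sb ab, 0 ≤ πb sb ab) (hπbsum : ∀ sb, ∑ ab, πb sb ab = 1)
    (πlift : S → A → ℝ)
    (hπpos : ∀ s a, 0 ≤ πlift s a) (hπsum : ∀ s, ∑ a, πlift s a = 1)
    -- π↑ is a lifted policy of π̄
    (hlift : ∀ s a, ∑ a' ∈ univ.filter (fun a' => g s a' = g s a), πlift s a'
        = πb (f s) (g s a))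
    -- Q^{π↑} is the (unique) fixed point of the Bellman operator for π↑ on M
    (Q : S → A → ℝ)
    (hQ : ∀ s a, Q s a
        = R s a + γ * ∑ s', τ a s s' * ∑ a', πlift s' a' * Q s' a')
    -- Q̄^{π̄} is the (unique) fixed point of the Bellman operator for π̄ on M̄
    (Qb : Sb → Ab → ℝ)
    (hQb : ∀ sb ab, Qb sb ab
        = Rb sb ab + γ * ∑ sb', τb ab sb sb' * ∑ ab', πb sb' ab' * Qb sb' ab') :
    ∀ s a, Q s a = Qb (f s) (g s a) :=
  stmt_2_general τ R γ hγ0 hγ1 hτpos hτsum τb Rb f g hf hg hR hτeq πb πlift hπpos hπsum hlift Q hQ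
    Qb hQb
end

section
/- Let h = (f, g_s) be a finite MDP homomorphism from M to M̄, and let π̄* be an optimal policy on M̄. Then the lifted policy π↑ of π̄* is an optimal policy for M, i.e., V^{π↑}(s) = V*(s) for all s ∈ S. -/
/-!
The projection `V ↦ V ∘ f` intertwines the Bellman operators of `M̄` with those of `M`: by
reward invariance and transition equivariance, `Q_M(V ∘ f)(s, a) = Q_M̄(V)(f s, g_s a)`, so the
optimality operator of `M` maps `V ∘ f` to `(T̄* V) ∘ f`, and averaging over the fibre of `g_s`
with the uniform lifted weights turns the evaluation operator of `π↑` into that of `π̄*`. Hence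
`V̄^{π̄*} ∘ f` and `V̄* ∘ f` are fixed points of the corresponding operators on `M`; these are
`γ`-contractions in the sup norm, so they coincide with `V^{π↑}` and `V*`, and
`V̄^{π̄*} = V̄*` finishes the proof.
-/

open Finset Function

section Pushforward

variable {α β : Type*} [Fintype α] [DecidableEq β]

theorem sum_mul_comp_eq_of_fiber_sum [Fintype β] (e : α → β) (p : α → ℝ) (q : β → ℝ)
    (hq : ∀ b, q b = ∑ x ∈ univ.filter (fun x => e x = b), p x) (φ : β → ℝ) :
    ∑ x, p x * φ (e x) = ∑ b, q b * φ b := by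
  rw [← sum_fiberwise univ e]
  refine sum_congr rfl fun b _ => ?_
  rw [hq, sum_mul]
  exact sum_congr rfl fun x hx => by rw [(mem_filter.mp hx).2]

theorem sum_filter_div_card_fiber {e : α → β} (p : β → ℝ) {b : β} (hb : ∃ x, e x = b) :
    ∑ x ∈ univ.filter (fun x => e x = b), p (e x) / #(univ.filter fun x' => e x' = e x)
      = p b := by
  obtain ⟨x₀, rfl⟩ := hb
  have hcard : (#(univ.filter fun x => e x = e x₀) : ℝ) ≠ 0 :=
    Nat.cast_ne_zero.mpr (card_pos.mpr ⟨x₀, by simp⟩).ne'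
  calc ∑ x ∈ univ.filter (fun x => e x = e x₀), p (e x) / #(univ.filter fun x' => e x' = e x)
      = ∑ _x ∈ univ.filter (fun x => e x = e x₀),
          p (e x₀) / #(univ.filter fun x' => e x' = e x₀) :=
        sum_congr rfl fun x hx => by rw [(mem_filter.mp hx).2]
    _ = p (e x₀) := by rw [sum_const, nsmul_eq_mul]; field_simp

end Pushforward

theorem abs_sum_mul_le_of_sum_eq_one {ι : Type*} [Fintype ι] {c x : ι → ℝ}
    (hc : ∀ i, 0 ≤ c i) (hsum : ∑ i, c i = 1) {B : ℝ} (hx : ∀ i, |x i| ≤ B) :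
    |∑ i, c i * x i| ≤ B :=
  calc |∑ i, c i * x i| ≤ ∑ i, c i * |x i| := by
        simpa only [abs_mul, abs_of_nonneg (hc _)] using
          abs_sum_le_sum_abs (fun i => c i * x i) univ
    _ ≤ ∑ i, c i * B := sum_le_sum fun i _ => mul_le_mul_of_nonneg_left (hx i) (hc i)
    _ = B := by rw [← sum_mul, hsum, one_mul]

theorem abs_sup'_sub_sup'_le {ι : Type*} {s : Finset ι} (hs : s.Nonempty) {F G : ι → ℝ}
    {B : ℝ} (h : ∀ i ∈ s, |F i - G i| ≤ B) : |s.sup' hs F - s.sup' hs G| ≤ B := by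
  rw [abs_sub_le_iff, sub_le_iff_le_add, sub_le_iff_le_add]
  constructor <;> refine sup'_le _ _ fun i hi => ?_
  · linarith [(abs_le.mp (h i hi)).2, le_sup' G hi]
  · linarith [(abs_le.mp (h i hi)).1, le_sup' F hi]

namespace MDP

variable {S A : Type*}

def qValue [Fintype S] (τ : A → S → S → ℝ) (R : S → A → ℝ) (γ : ℝ) (V : S → ℝ) (s : S)
    (a : A) : ℝ :=
  R s a + γ * ∑ s', τ a s s' * V s'

def policyBellman [Fintype S] [Fintype A] (τ : A → S → S → ℝ) (R : S → A → ℝ) (γ : ℝ)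
    (π : S → A → ℝ) (V : S → ℝ) : S → ℝ :=
  fun s => ∑ a, π s a * qValue τ R γ V s a

def optimalBellman [Fintype S] [Fintype A] [Nonempty A] (τ : A → S → S → ℝ) (R : S → A → ℝ)
    (γ : ℝ) (V : S → ℝ) : S → ℝ :=
  fun s => univ.sup' univ_nonempty (qValue τ R γ V s)

section Contraction

variable {τ : A → S → S → ℝ} {R : S → A → ℝ} {γ : ℝ}

theorem abs_qValue_sub_le [Fintype S] (hγ : 0 ≤ γ) (hτpos : ∀ a s s', 0 ≤ τ a s s')
    (hτsum : ∀ a s, ∑ s', τ a s s' = 1) (V W : S → ℝ) (s : S) (a : A) :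
    |qValue τ R γ V s a - qValue τ R γ W s a| ≤ γ * dist V W := by
  have hdiff : qValue τ R γ V s a - qValue τ R γ W s a
      = γ * ∑ s', τ a s s' * (V s' - W s') := by
    simp only [qValue, mul_sub, sum_sub_distrib]
    ring
  rw [hdiff, abs_mul, abs_of_nonneg hγ]
  exact mul_le_mul_of_nonneg_left
    (abs_sum_mul_le_of_sum_eq_one (hτpos a s) (hτsum a s) fun s' => dist_le_pi_dist V W s') hγ

theorem contractingWith_policyBellman [Fintype S] [Fintype A] (hγ0 : 0 ≤ γ) (hγ1 : γ < 1)
    (hτpos : ∀ a s s', 0 ≤ τ a s s') (hτsum : ∀ a s, ∑ s', τ a s s' = 1)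
    {π : S → A → ℝ} (hπpos : ∀ s a, 0 ≤ π s a) (hπsum : ∀ s, ∑ a, π s a = 1) :
    ContractingWith ⟨γ, hγ0⟩ (policyBellman τ R γ π) := by
  refine ⟨hγ1, LipschitzWith.of_dist_le_mul fun V W => ?_⟩
  refine (dist_pi_le_iff (by positivity)).2 fun s => ?_
  rw [Real.dist_eq, policyBellman, policyBellman, ← sum_sub_distrib]
  simp only [← mul_sub]
  exact abs_sum_mul_le_of_sum_eq_one (hπpos s) (hπsum s) fun a =>
    abs_qValue_sub_le hγ0 hτpos hτsum V W s a

theorem contractingWith_optimalBellman [Fintype S] [Fintype A] [Nonempty A] (hγ0 : 0 ≤ γ)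
    (hγ1 : γ < 1) (hτpos : ∀ a s s', 0 ≤ τ a s s') (hτsum : ∀ a s, ∑ s', τ a s s' = 1) :
    ContractingWith ⟨γ, hγ0⟩ (optimalBellman τ R γ) := by
  refine ⟨hγ1, LipschitzWith.of_dist_le_mul fun V W => ?_⟩
  refine (dist_pi_le_iff (by positivity)).2 fun s => ?_
  exact abs_sup'_sub_sup'_le _ fun a _ => abs_qValue_sub_le hγ0 hτpos hτsum V W s a

end Contraction

section Homomorphism

variable {Sb Ab : Type*} {τ : A → S → S → ℝ} {R : S → A → ℝ}
  {τb : Ab → Sb → Sb → ℝ} {Rb : Sb → Ab → ℝ} {f : S → Sb} {g : S → A → Ab} (γ : ℝ)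

structure IsHomomorphism [Fintype S] [DecidableEq Sb] (τ : A → S → S → ℝ) (R : S → A → ℝ)
    (τb : Ab → Sb → Sb → ℝ) (Rb : Sb → Ab → ℝ) (f : S → Sb) (g : S → A → Ab) : Prop where
  surjective_state : Surjective f
  surjective_action : ∀ s, Surjective (g s)
  reward_eq : ∀ s a, R s a = Rb (f s) (g s a)
  transition_eq : ∀ s a s', τb (g s a) (f s) (f s')
    = ∑ s'' ∈ univ.filter (fun s'' => f s'' = f s'), τ a s s''

noncomputable def liftPolicy [Fintype A] [DecidableEq Ab] (f : S → Sb) (g : S → A → Ab)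
    (πb : Sb → Ab → ℝ) : S → A → ℝ :=
  fun s a => πb (f s) (g s a) / #(univ.filter fun a' => g s a' = g s a)

theorem liftPolicy_nonneg [Fintype A] [DecidableEq Ab] {πb : Sb → Ab → ℝ}
    (hπbpos : ∀ sb ab, 0 ≤ πb sb ab) (s : S) (a : A) : 0 ≤ liftPolicy f g πb s a :=
  div_nonneg (hπbpos _ _) (Nat.cast_nonneg _)

theorem sum_liftPolicy_mul_comp [Fintype A] [Fintype Ab] [DecidableEq Ab] {πb : Sb → Ab → ℝ}
    (hg : ∀ s, Surjective (g s)) (H : Ab → ℝ) (s : S) :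
    ∑ a, liftPolicy f g πb s a * H (g s a) = ∑ ab, πb (f s) ab * H ab :=
  sum_mul_comp_eq_of_fiber_sum (g s) _ _
    (fun ab => (sum_filter_div_card_fiber (πb (f s)) (hg s ab)).symm) H

theorem sum_liftPolicy [Fintype A] [Fintype Ab] [DecidableEq Ab] {πb : Sb → Ab → ℝ}
    (hg : ∀ s, Surjective (g s)) (hπbsum : ∀ sb, ∑ ab, πb sb ab = 1) (s : S) :
    ∑ a, liftPolicy f g πb s a = 1 := by
  simpa only [mul_one, hπbsum] using sum_liftPolicy_mul_comp (πb := πb) hg (fun _ => 1) s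

theorem IsHomomorphism.qValue_comp [Fintype S] [Fintype Sb] [DecidableEq Sb]
    (h : IsHomomorphism τ R τb Rb f g) (V : Sb → ℝ) (s : S) (a : A) :
    qValue τ R γ (V ∘ f) s a = qValue τb Rb γ V (f s) (g s a) := by
  have hpush : ∑ s', τ a s s' * V (f s') = ∑ sb', τb (g s a) (f s) sb' * V sb' :=
    sum_mul_comp_eq_of_fiber_sum f _ _
      (fun sb => by obtain ⟨s', rfl⟩ := h.surjective_state sb; exact h.transition_eq s a s') V
  simp only [qValue, comp_apply, h.reward_eq, hpush]

theorem IsHomomorphism.policyBellman_liftPolicy_comp [Fintype S] [Fintype A] [Fintype Sb]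
    [DecidableEq Sb] [Fintype Ab] [DecidableEq Ab] (h : IsHomomorphism τ R τb Rb f g)
    (πb : Sb → Ab → ℝ) (V : Sb → ℝ) :
    policyBellman τ R γ (liftPolicy f g πb) (V ∘ f) = policyBellman τb Rb γ πb V ∘ f := by
  funext s
  simp only [policyBellman, comp_apply, h.qValue_comp γ]
  exact sum_liftPolicy_mul_comp h.surjective_action _ s

theorem IsHomomorphism.optimalBellman_comp [Fintype S] [Fintype A] [Nonempty A] [Fintype Sb]
    [DecidableEq Sb] [Fintype Ab] [DecidableEq Ab] [Nonempty Ab]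
    (h : IsHomomorphism τ R τb Rb f g) (V : Sb → ℝ) :
    optimalBellman τ R γ (V ∘ f) = optimalBellman τb Rb γ V ∘ f := by
  funext s
  have hq : qValue τ R γ (V ∘ f) s = qValue τb Rb γ V (f s) ∘ g s :=
    funext (h.qValue_comp γ V s)
  rw [comp_apply, optimalBellman, optimalBellman, hq, sup'_comp_eq_image univ_nonempty]
  exact sup'_congr _ (image_univ_of_surjective (h.surjective_action s)) fun _ _ => rfl

end Homomorphism

end MDP

theorem stmt_3_general
    {S A Sb Ab : Type*} [Fintype S] [Fintype A] [Fintype Sb] [Fintype Ab]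
    [DecidableEq Sb] [DecidableEq Ab] [Nonempty A] [Nonempty Ab]
    (τ : A → S → S → ℝ) (R : S → A → ℝ) (γ : ℝ) (hγ0 : 0 < γ) (hγ1 : γ < 1)
    (hτpos : ∀ a s s', 0 ≤ τ a s s') (hτsum : ∀ a s, ∑ s', τ a s s' = 1)
    (τb : Ab → Sb → Sb → ℝ) (Rb : Sb → Ab → ℝ)
    (f : S → Sb) (g : S → A → Ab)
    (hf : Function.Surjective f) (hg : ∀ s, Function.Surjective (g s))
    -- reward invariance
    (hR : ∀ s a, R s a = Rb (f s) (g s a))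
    -- transition equivariance
    (hτeq : ∀ s a s', τb (g s a) (f s) (f s')
        = ∑ s'' ∈ univ.filter (fun s'' => f s'' = f s'), τ a s s'')
    -- π̄* is a policy on M̄
    (πb : Sb → Ab → ℝ)
    (hπbpos : ∀ sb ab, 0 ≤ πb sb ab) (hπbsum : ∀ sb, ∑ ab, πb sb ab = 1)
    -- V̄^{π̄*}: value function of π̄* on M̄
    (Vbπ : Sb → ℝ)
    (hVbπ : ∀ sb, Vbπ sb
        = ∑ ab, πb sb ab * (Rb sb ab + γ * ∑ sb', τb ab sb sb' * Vbπ sb'))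
    -- V̄*: optimal value function of M̄
    (Vbstar : Sb → ℝ)
    (hVbstar : ∀ sb, Vbstar sb
        = univ.sup' univ_nonempty
            (fun ab => Rb sb ab + γ * ∑ sb', τb ab sb sb' * Vbstar sb'))
    -- π̄* is optimal on M̄
    (hopt : ∀ sb, Vbπ sb = Vbstar sb)
    -- the lifted policy of π̄*
    (πlift : S → A → ℝ)
    (hlift : ∀ s a, πlift s a
        = πb (f s) (g s a) / (univ.filter (fun a' => g s a' = g s a)).card)
    -- V^{π↑}: value function of the lifted policy on M
    (Vπ : S → ℝ)
    (hVπ : ∀ s, Vπ s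
        = ∑ a, πlift s a * (R s a + γ * ∑ s', τ a s s' * Vπ s'))
    -- V*: optimal value function of M
    (Vstar : S → ℝ)
    (hVstar : ∀ s, Vstar s
        = univ.sup' univ_nonempty
            (fun a => R s a + γ * ∑ s', τ a s s' * Vstar s')) :
    ∀ s, Vπ s = Vstar s := by
  intro s
  have hM : MDP.IsHomomorphism τ R τb Rb f g := ⟨hf, hg, hR, hτeq⟩
  obtain rfl : πlift = MDP.liftPolicy f g πb := funext fun s => funext (hlift s)
  have hVπ_fix : IsFixedPt (MDP.policyBellman τ R γ (MDP.liftPolicy f g πb)) Vπ :=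
    funext fun s => (hVπ s).symm
  have hVbπ_fix : IsFixedPt (MDP.policyBellman τb Rb γ πb) Vbπ := funext fun sb => (hVbπ sb).symm
  have hVstar_fix : IsFixedPt (MDP.optimalBellman τ R γ) Vstar := funext fun s => (hVstar s).symm
  have hVbstar_fix : IsFixedPt (MDP.optimalBellman τb Rb γ) Vbstar :=
    funext fun sb => (hVbstar sb).symm
  have hπ : Vπ = Vbπ ∘ f :=
    (MDP.contractingWith_policyBellman hγ0.le hγ1 hτpos hτsum (MDP.liftPolicy_nonneg hπbpos)
      (MDP.sum_liftPolicy hg hπbsum)).fixedPoint_unique' hVπ_fix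
      (hVbπ_fix.map (g := (· ∘ f)) fun V => (hM.policyBellman_liftPolicy_comp γ πb V).symm)
  have hstar : Vstar = Vbstar ∘ f :=
    (MDP.contractingWith_optimalBellman hγ0.le hγ1 hτpos hτsum).fixedPoint_unique' hVstar_fix
      (hVbstar_fix.map (g := (· ∘ f)) fun V => (hM.optimalBellman_comp γ V).symm)
  rw [hπ, hstar, comp_apply, comp_apply, hopt]

/-- Optimality of the lifted policy: if `π̄*` is optimal on the image MDP `M̄`, then its
lift `π↑(a|s) = π̄*(g_s(a)|f(s)) / |g_s⁻¹({g_s(a)})|` is optimal for `M`,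
i.e. `V^{π↑}(s) = V*(s)` for all `s`. -/
theorem stmt_3
    {S A Sb Ab : Type*} [Fintype S] [Fintype A] [Fintype Sb] [Fintype Ab]
    [DecidableEq Sb] [DecidableEq Ab] [Nonempty A] [Nonempty Ab]
    (τ : A → S → S → ℝ) (R : S → A → ℝ) (γ : ℝ) (hγ0 : 0 < γ) (hγ1 : γ < 1)
    (hτpos : ∀ a s s', 0 ≤ τ a s s') (hτsum : ∀ a s, ∑ s', τ a s s' = 1)
    (τb : Ab → Sb → Sb → ℝ) (Rb : Sb → Ab → ℝ)
    (hτbpos : ∀ ab sb sb', 0 ≤ τb ab sb sb') (hτbsum : ∀ ab sb, ∑ sb', τb ab sb sb' = 1)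
    (f : S → Sb) (g : S → A → Ab)
    (hf : Function.Surjective f) (hg : ∀ s, Function.Surjective (g s))
    -- reward invariance
    (hR : ∀ s a, R s a = Rb (f s) (g s a))
    -- transition equivariance
    (hτeq : ∀ s a s', τb (g s a) (f s) (f s')
        = ∑ s'' ∈ univ.filter (fun s'' => f s'' = f s'), τ a s s'')
    -- π̄* is a policy on M̄
    (πb : Sb → Ab → ℝ)
    (hπbpos : ∀ sb ab, 0 ≤ πb sb ab) (hπbsum : ∀ sb, ∑ ab, πb sb ab = 1)
    -- V̄^{π̄*}: value function of π̄* on M̄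
    (Vbπ : Sb → ℝ)
    (hVbπ : ∀ sb, Vbπ sb
        = ∑ ab, πb sb ab * (Rb sb ab + γ * ∑ sb', τb ab sb sb' * Vbπ sb'))
    -- V̄*: optimal value function of M̄
    (Vbstar : Sb → ℝ)
    (hVbstar : ∀ sb, Vbstar sb
        = univ.sup' univ_nonempty
            (fun ab => Rb sb ab + γ * ∑ sb', τb ab sb sb' * Vbstar sb'))
    -- π̄* is optimal on M̄
    (hopt : ∀ sb, Vbπ sb = Vbstar sb)
    -- the lifted policy of π̄*
    (πlift : S → A → ℝ)
    (hlift : ∀ s a, πlift s a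
        = πb (f s) (g s a) / (univ.filter (fun a' => g s a' = g s a)).card)
    -- V^{π↑}: value function of the lifted policy on M
    (Vπ : S → ℝ)
    (hVπ : ∀ s, Vπ s
        = ∑ a, πlift s a * (R s a + γ * ∑ s', τ a s s' * Vπ s'))
    -- V*: optimal value function of M
    (Vstar : S → ℝ)
    (hVstar : ∀ s, Vstar s
        = univ.sup' univ_nonempty
            (fun a => R s a + γ * ∑ s', τ a s s' * Vstar s')) :
    ∀ s, Vπ s = Vstar s :=
  stmt_3_general τ R γ hγ0 hγ1 hτpos hτsum τb Rb f g hf hg hR hτeq πb hπbpos hπbsum Vbπ hVbπ Vbstar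
    hVbstar hopt πlift hlift Vπ hVπ Vstar hVstar
end

section
/- Let h = (f, g_s) be a continuous MDP homomorphism from M to M̄ with bounded measurable rewards and γ ∈ (0,1). Define Q₀(s,a) = R(s,a) and Q_{m+1}(s,a) = R(s,a) + γ ∫_S sup_{a'} Q_m(s', a') τ_a(ds'|s), and analogously Q̄_m on M̄. Then for all m ≥ 0 and all (s,a): Q_m(s,a) = Q̄_m(f(s), g_s(a)). -/
/-!
Induction on `m`. Because every `g s` is surjective, the supremum of `Q m s'` over actions equals
that of `Q̄ m (f s')`, and the change of variables formula for the pushforward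
`f_* τ_a(·|s) = τ̄_{g_s(a)}(·|f(s))` then identifies the two expected next-step values.
-/

open MeasureTheory

section LiftedValue

variable {S A Sb Ab : Type*} {f : S → Sb} {g : S → A → Ab} {Q : S → A → ℝ} {Qb : Sb → Ab → ℝ}

theorem iSup_eq_iSup_of_eq_comp (hg : ∀ s, Function.Surjective (g s))
    (hQ : ∀ s a, Q s a = Qb (f s) (g s a)) (s : S) :
    ⨆ a, Q s a = ⨆ ab, Qb (f s) ab := by
  simp only [hQ]
  exact (hg s).iSup_comp (Qb (f s))

theorem integral_iSup_eq_of_map_eq [MeasurableSpace S] [MeasurableSpace Sb]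
    {μ : Measure S} {ν : Measure Sb} (hf : Measurable f)
    (hg : ∀ s, Function.Surjective (g s)) (hQ : ∀ s a, Q s a = Qb (f s) (g s a))
    (hQb : AEStronglyMeasurable (fun sb => ⨆ ab, Qb sb ab) ν) (hμν : μ.map f = ν) :
    ∫ s, ⨆ a, Q s a ∂μ = ∫ sb, ⨆ ab, Qb sb ab ∂ν := by
  subst hμν
  simp only [iSup_eq_iSup_of_eq_comp hg hQ]
  exact (integral_map hf.aemeasurable hQb).symm

end LiftedValue

theorem stmt_11_general
    {S A Sb Ab : Type*}
    [MeasurableSpace S] [MeasurableSpace Sb]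
    -- the actual MDP M
    (τ : A → S → Measure S)
    (R : S → A → ℝ)
    -- the abstract MDP M̄
    (τb : Ab → Sb → Measure Sb)
    (Rb : Sb → Ab → ℝ)
    (γ : ℝ)
    -- the continuous MDP homomorphism h = (f, g_s)
    (f : S → Sb) (hfmeas : Measurable f)
    (g : S → A → Ab)
    (hgsurj : ∀ s, Function.Surjective (g s))
    -- reward invariance
    (hR : ∀ s a, R s a = Rb (f s) (g s a))
    -- transition equivariance: τ̄_{g_s(a)}(·|f(s)) is the pushforward of τ_a(·|s) by f
    (hτeq : ∀ s a, Measure.map f (τ a s) = τb (g s a) (f s))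
    -- the value-iteration sequence on M
    (Q : ℕ → S → A → ℝ)
    (hQ0 : ∀ s a, Q 0 s a = R s a)
    (hQ : ∀ m s a, Q (m + 1) s a = R s a + γ * ∫ s', (⨆ a', Q m s' a') ∂(τ a s))
    -- the value-iteration sequence on M̄
    (Qb : ℕ → Sb → Ab → ℝ)
    (hQb0 : ∀ sb ab, Qb 0 sb ab = Rb sb ab)
    (hQb : ∀ m sb ab, Qb (m + 1) sb ab
        = Rb sb ab + γ * ∫ sb', (⨆ ab', Qb m sb' ab') ∂(τb ab sb))
    -- measurability of the iterated suprema
    (hQbmeas : ∀ m, Measurable fun sb' => ⨆ ab', Qb m sb' ab') :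
    ∀ m s a, Q m s a = Qb m (f s) (g s a) := by
  intro m
  induction m with
  | zero => intro s a; rw [hQ0, hQb0, hR]
  | succ m ih =>
    intro s a
    rw [hQ, hQb, hR,
      integral_iSup_eq_of_map_eq hfmeas hgsurj ih (hQbmeas m).aestronglyMeasurable (hτeq s a)]

/-- Value-iteration equivalence for continuous MDP homomorphisms: the value-iteration
sequences `Q_m` on `M` and `Q̄_m` on `M̄` satisfy `Q_m(s,a) = Q̄_m(f(s), g_s(a))`. -/
theorem stmt_11
    {S A Sb Ab : Type*}
    [MeasurableSpace S] [MeasurableSpace A] [MeasurableSpace Sb] [MeasurableSpace Ab]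
    -- the actual MDP M
    (τ : A → S → Measure S) (hτ : ∀ a s, IsProbabilityMeasure (τ a s))
    (R : S → A → ℝ) (hRmeas : Measurable fun p : S × A => R p.1 p.2)
    (hRbdd : ∃ C, ∀ s a, |R s a| ≤ C)
    -- the abstract MDP M̄
    (τb : Ab → Sb → Measure Sb) (hτb : ∀ ab sb, IsProbabilityMeasure (τb ab sb))
    (Rb : Sb → Ab → ℝ) (hRbmeas : Measurable fun p : Sb × Ab => Rb p.1 p.2)
    (γ : ℝ) (hγ0 : 0 < γ) (hγ1 : γ < 1)
    -- the continuous MDP homomorphism h = (f, g_s)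
    (f : S → Sb) (hfmeas : Measurable f) (hfsurj : Function.Surjective f)
    (g : S → A → Ab) (hgmeas : ∀ s, Measurable (g s))
    (hgsurj : ∀ s, Function.Surjective (g s))
    -- reward invariance
    (hR : ∀ s a, R s a = Rb (f s) (g s a))
    -- transition equivariance: τ̄_{g_s(a)}(·|f(s)) is the pushforward of τ_a(·|s) by f
    (hτeq : ∀ s a, Measure.map f (τ a s) = τb (g s a) (f s))
    -- the value-iteration sequence on M
    (Q : ℕ → S → A → ℝ)
    (hQ0 : ∀ s a, Q 0 s a = R s a)
    (hQ : ∀ m s a, Q (m + 1) s a = R s a + γ * ∫ s', (⨆ a', Q m s' a') ∂(τ a s))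
    -- the value-iteration sequence on M̄
    (Qb : ℕ → Sb → Ab → ℝ)
    (hQb0 : ∀ sb ab, Qb 0 sb ab = Rb sb ab)
    (hQb : ∀ m sb ab, Qb (m + 1) sb ab
        = Rb sb ab + γ * ∫ sb', (⨆ ab', Qb m sb' ab') ∂(τb ab sb))
    -- measurability of the iterated suprema
    (hQmeas : ∀ m, Measurable fun s' => ⨆ a', Q m s' a')
    (hQbmeas : ∀ m, Measurable fun sb' => ⨆ ab', Qb m sb' ab') :
    ∀ m s a, Q m s a = Qb m (f s) (g s a) :=
  stmt_11_general τ R τb Rb γ f hfmeas g hgsurj hR hτeq Q hQ0 hQ Qb hQb0 hQb hQbmeas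
end

section
/- Let h = (f, g_s) be a continuous MDP homomorphism from M to M̄ with bounded rewards and γ ∈ (0,1). Then the optimal action-value functions (defined as the limits of the value-iteration sequences Q_m and Q̄_m, which converge uniformly) satisfy Q*(s,a) = Q̄*(f(s), g_s(a)) for all (s,a) ∈ S × A. -/
/-! An MDP homomorphism `(f, g_s)` maps each value-iteration iterate of `M` onto the corresponding
iterate of `M̄`: reward invariance gives the base case, and in the Bellman step the maximum over
actions is preserved because each `g_s` is surjective, while the expected next-state value is
preserved by the change of variables `τ(a, s) ∘ f⁻¹ = τ̄(g_s a, f s)`. Passing to the limit gives the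
equality of the optimal action-value functions. -/

open MeasureTheory Filter Topology

theorem integral_comp_of_map_eq {α β : Type*} [MeasurableSpace α] [MeasurableSpace β]
    {f : α → β} (hf : Measurable f) {μ : Measure α} {ν : Measure β} (hμν : μ.map f = ν)
    {φ : β → ℝ} (hφ : Measurable φ) :
    ∫ x, φ (f x) ∂μ = ∫ y, φ y ∂ν := by
  rw [← hμν, integral_map hf.aemeasurable hφ.aestronglyMeasurable]

theorem valueIteration_eq_comp_of_homomorphism {S A Sb Ab : Type*}
    [MeasurableSpace S] [MeasurableSpace Sb]
    {τ : A → S → Measure S} {R : S → A → ℝ} {τb : Ab → Sb → Measure Sb} {Rb : Sb → Ab → ℝ}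
    {γ : ℝ} {f : S → Sb} (hf : Measurable f) {g : S → A → Ab}
    (hg : ∀ s, Function.Surjective (g s))
    (hR : ∀ s a, R s a = Rb (f s) (g s a))
    (hτ : ∀ s a, (τ a s).map f = τb (g s a) (f s))
    {Q : ℕ → S → A → ℝ} (hQ0 : ∀ s a, Q 0 s a = R s a)
    (hQ : ∀ m s a, Q (m + 1) s a = R s a + γ * ∫ s', (⨆ a', Q m s' a') ∂(τ a s))
    {Qb : ℕ → Sb → Ab → ℝ} (hQb0 : ∀ sb ab, Qb 0 sb ab = Rb sb ab)
    (hQb : ∀ m sb ab, Qb (m + 1) sb ab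
        = Rb sb ab + γ * ∫ sb', (⨆ ab', Qb m sb' ab') ∂(τb ab sb))
    (hQbmeas : ∀ m, Measurable fun sb' => ⨆ ab', Qb m sb' ab') :
    ∀ m s a, Q m s a = Qb m (f s) (g s a) := by
  intro m
  induction m with
  | zero => intro s a; rw [hQ0, hQb0, hR]
  | succ m ih =>
    intro s a
    have hsup : ∀ s', ⨆ a', Q m s' a' = ⨆ ab', Qb m (f s') ab' := fun s' => by
      simp only [ih, (hg s').iSup_comp]
    rw [hQ, hQb, hR, ← integral_comp_of_map_eq hf (hτ s a) (hQbmeas m)]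
    simp only [hsup]

theorem stmt_12_general
    {S A Sb Ab : Type*}
    [MeasurableSpace S] [MeasurableSpace Sb]
    -- the actual MDP M
    (τ : A → S → Measure S)
    (R : S → A → ℝ)
    -- the abstract MDP M̄
    (τb : Ab → Sb → Measure Sb)
    (Rb : Sb → Ab → ℝ)
    (γ : ℝ)
    -- the continuous MDP homomorphism h = (f, g_s)
    (f : S → Sb) (hfmeas : Measurable f)
    (g : S → A → Ab)
    (hgsurj : ∀ s, Function.Surjective (g s))
    -- reward invariance
    (hR : ∀ s a, R s a = Rb (f s) (g s a))
    -- transition equivariance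
    (hτeq : ∀ s a, Measure.map f (τ a s) = τb (g s a) (f s))
    -- the value-iteration sequence on M
    (Q : ℕ → S → A → ℝ)
    (hQ0 : ∀ s a, Q 0 s a = R s a)
    (hQ : ∀ m s a, Q (m + 1) s a = R s a + γ * ∫ s', (⨆ a', Q m s' a') ∂(τ a s))
    -- the value-iteration sequence on M̄
    (Qb : ℕ → Sb → Ab → ℝ)
    (hQb0 : ∀ sb ab, Qb 0 sb ab = Rb sb ab)
    (hQb : ∀ m sb ab, Qb (m + 1) sb ab
        = Rb sb ab + γ * ∫ sb', (⨆ ab', Qb m sb' ab') ∂(τb ab sb))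
    -- measurability of the iterated suprema
    (hQbmeas : ∀ m, Measurable fun sb' => ⨆ ab', Qb m sb' ab')
    -- the optimal value functions are the (uniform) limits of the iteration
    (Qstar : S → A → ℝ)
    (hQstar : TendstoUniformly (fun m => fun p : S × A => Q m p.1 p.2)
        (fun p : S × A => Qstar p.1 p.2) atTop)
    (Qbstar : Sb → Ab → ℝ)
    (hQbstar : TendstoUniformly (fun m => fun p : Sb × Ab => Qb m p.1 p.2)
        (fun p : Sb × Ab => Qbstar p.1 p.2) atTop) :
    ∀ s a, Qstar s a = Qbstar (f s) (g s a) := by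
  intro s a
  have hiter := valueIteration_eq_comp_of_homomorphism hfmeas hgsurj hR hτeq hQ0 hQ hQb0 hQb
    hQbmeas
  have hlim : Tendsto (fun m => Qb m (f s) (g s a)) atTop (𝓝 (Qstar s a)) := by
    simpa only [hiter] using hQstar.tendsto_at (s, a)
  exact tendsto_nhds_unique hlim (hQbstar.tendsto_at (f s, g s a))

/-- Optimal value equivalence for continuous MDP homomorphisms: the optimal action-value
functions, obtained as limits of the value-iteration sequences, satisfy
`Q*(s,a) = Q̄*(f(s), g_s(a))` for all `(s,a)`. -/
theorem stmt_12
    {S A Sb Ab : Type*}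
    [MeasurableSpace S] [MeasurableSpace A] [MeasurableSpace Sb] [MeasurableSpace Ab]
    -- the actual MDP M
    (τ : A → S → Measure S) (hτ : ∀ a s, IsProbabilityMeasure (τ a s))
    (R : S → A → ℝ) (hRmeas : Measurable fun p : S × A => R p.1 p.2)
    (hRbdd : ∃ C, ∀ s a, |R s a| ≤ C)
    -- the abstract MDP M̄
    (τb : Ab → Sb → Measure Sb) (hτb : ∀ ab sb, IsProbabilityMeasure (τb ab sb))
    (Rb : Sb → Ab → ℝ) (hRbmeas : Measurable fun p : Sb × Ab => Rb p.1 p.2)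
    (γ : ℝ) (hγ0 : 0 < γ) (hγ1 : γ < 1)
    -- the continuous MDP homomorphism h = (f, g_s)
    (f : S → Sb) (hfmeas : Measurable f) (hfsurj : Function.Surjective f)
    (g : S → A → Ab) (hgmeas : ∀ s, Measurable (g s))
    (hgsurj : ∀ s, Function.Surjective (g s))
    -- reward invariance
    (hR : ∀ s a, R s a = Rb (f s) (g s a))
    -- transition equivariance
    (hτeq : ∀ s a, Measure.map f (τ a s) = τb (g s a) (f s))
    -- the value-iteration sequence on M
    (Q : ℕ → S → A → ℝ)
    (hQ0 : ∀ s a, Q 0 s a = R s a)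
    (hQ : ∀ m s a, Q (m + 1) s a = R s a + γ * ∫ s', (⨆ a', Q m s' a') ∂(τ a s))
    -- the value-iteration sequence on M̄
    (Qb : ℕ → Sb → Ab → ℝ)
    (hQb0 : ∀ sb ab, Qb 0 sb ab = Rb sb ab)
    (hQb : ∀ m sb ab, Qb (m + 1) sb ab
        = Rb sb ab + γ * ∫ sb', (⨆ ab', Qb m sb' ab') ∂(τb ab sb))
    -- measurability of the iterated suprema
    (hQmeas : ∀ m, Measurable fun s' => ⨆ a', Q m s' a')
    (hQbmeas : ∀ m, Measurable fun sb' => ⨆ ab', Qb m sb' ab')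
    -- the optimal value functions are the (uniform) limits of the iteration
    (Qstar : S → A → ℝ)
    (hQstar : TendstoUniformly (fun m => fun p : S × A => Q m p.1 p.2)
        (fun p : S × A => Qstar p.1 p.2) atTop)
    (Qbstar : Sb → Ab → ℝ)
    (hQbstar : TendstoUniformly (fun m => fun p : Sb × Ab => Qb m p.1 p.2)
        (fun p : Sb × Ab => Qbstar p.1 p.2) atTop) :
    ∀ s a, Qstar s a = Qbstar (f s) (g s a) :=
  stmt_12_general τ R τb Rb γ f hfmeas g hgsurj hR hτeq Q hQ0 hQ Qb hQb0 hQb hQbmeas Qstar hQstar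
    Qbstar hQbstar
end

section
/- Let g_s: A → Ā be a local diffeomorphism between smooth manifolds of equal dimension, π↑: S → A a deterministic policy differentiable in parameters θ, and π̄: S̄ → Ā the abstract policy satisfying g_s(π↑_θ(s)) = π̄_θ(f(s)) for all s. Suppose Q^{π↑}(s,a) = Q̄^{π̄}(f(s), g_s(a)) with both Q functions differentiable in the action argument. Then for every s: ∇_a Q^{π↑}(s,a)|_{a=π↑_θ(s)} · ∇_θ π↑_θ(s) = ∇_{ā} Q̄^{π̄}(f(s), ā)|_{ā=π̄_θ(f(s))} · ∇_θ π̄_θ(f(s)). -/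
theorem HasFDerivAt.eq_comp_of_comp_eq
    {E F G : Type*}
    [NormedAddCommGroup E] [NormedSpace ℝ E]
    [NormedAddCommGroup F] [NormedSpace ℝ F]
    [NormedAddCommGroup G] [NormedSpace ℝ G]
    {f : E → F} {g : F → G} {h : E → G} {f' : E →L[ℝ] F} {g' : F →L[ℝ] G} {h' : E →L[ℝ] G}
    {x : E} (hcomp : ∀ y, g (f y) = h y)
    (hf : HasFDerivAt f f' x) (hg : HasFDerivAt g g' (f x)) (hh : HasFDerivAt h h' x) :
    h' = g'.comp f' :=
  hh.unique (by simpa only [Function.comp_def, hcomp] using hg.comp x hf)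

/-- Equivalence of deterministic policy gradients: if `g_s` is a local diffeomorphism
(its derivative at `π↑_θ(s)` is a linear isomorphism `P`), the policies satisfy the
lifting relation `g_s(π↑_θ(s)) = π̄_θ(f(s))`, and value equivalence
`Q(s,a) = Q̄(f(s), g_s(a))` holds, then
`∇_a Q(s,a)|_{a=π↑_θ(s)} ∘ ∇_θ π↑_θ(s) = ∇_ā Q̄(f(s),ā)|_{ā=π̄_θ(f(s))} ∘ ∇_θ π̄_θ(f(s))`. -/
theorem stmt_14
    {Θ A Ab S Sb : Type*}
    [NormedAddCommGroup Θ] [NormedSpace ℝ Θ]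
    [NormedAddCommGroup A] [NormedSpace ℝ A]
    [NormedAddCommGroup Ab] [NormedSpace ℝ Ab]
    (f : S → Sb) (g : S → A → Ab)
    (πl : Θ → S → A) (πb : Θ → Sb → Ab)
    (Q : S → A → ℝ) (Qb : Sb → Ab → ℝ)
    -- policy lifting relation g_s(π↑_θ(s)) = π̄_θ(f(s))
    (hcomm : ∀ θ s, g s (πl θ s) = πb θ (f s))
    -- value equivalence
    (hval : ∀ s a, Q s a = Qb (f s) (g s a))
    (θ : Θ) (s : S)
    -- ∇_θ π↑_θ(s)
    (Dπ : Θ →L[ℝ] A) (hDπ : HasFDerivAt (fun θ' => πl θ' s) Dπ θ)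
    -- ∇_θ π̄_θ(f(s))
    (Dπb : Θ →L[ℝ] Ab) (hDπb : HasFDerivAt (fun θ' => πb θ' (f s)) Dπb θ)
    -- g_s is a local diffeomorphism: its differential at π↑_θ(s) is a linear isomorphism
    (P : A ≃L[ℝ] Ab) (hP : HasFDerivAt (g s) (P : A →L[ℝ] Ab) (πl θ s))
    -- ∇_a Q(s,a)|_{a = π↑_θ(s)}
    (DQ : A →L[ℝ] ℝ) (hDQ : HasFDerivAt (fun a => Q s a) DQ (πl θ s))
    -- ∇_ā Q̄(f(s),ā)|_{ā = π̄_θ(f(s))}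
    (DQb : Ab →L[ℝ] ℝ) (hDQb : HasFDerivAt (fun ab => Qb (f s) ab) DQb (πb θ (f s))) :
    DQ.comp Dπ = DQb.comp Dπb := by
  -- Both sides equal `DQb ∘ P ∘ Dπ`.
  have hDQ_eq : DQ = DQb.comp (P : A →L[ℝ] Ab) :=
    HasFDerivAt.eq_comp_of_comp_eq (fun a => (hval s a).symm) hP
      (by rwa [hcomm θ s]) hDQ
  have hDπb_eq : Dπb = (P : A →L[ℝ] Ab).comp Dπ :=
    HasFDerivAt.eq_comp_of_comp_eq (fun θ' => hcomm θ' s) hDπ hP hDπb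
  rw [hDQ_eq, hDπb_eq, ContinuousLinearMap.comp_assoc]
end
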